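/- arXiv:1502.05942 — 3 statements merged into one kernel-verified Lean document; each statement's English description precedes it below -/
import Mathlib

section
/- Fujii's lemma: for μ-almost every x, any choice of medians m(f;Q) over dyadic cubes Q containing x converges to f(x) as the side length ℓ(Q) → 0. -/
open MeasureTheory Set

noncomputable section

/-- A dyadic cube in `ℝ^d`: side length `2^n`, lower-left corner `m * 2^n`. -/
structure DyadicCube (d : ℕ) where
  n : ℤ
  m : Fin d → ℤ

namespace DyadicCube

/-- The underlying set of a dyadic cube. -/
def toSet {d : ℕ} (Q : DyadicCube d) : Set (Fin d → ℝ) :=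
  {x | ∀ i, (Q.m i : ℝ) * 2 ^ Q.n ≤ x i ∧ x i < ((Q.m i : ℝ) + 1) * 2 ^ Q.n}

/-- The dyadic parent of a dyadic cube. -/
def parent {d : ℕ} (Q : DyadicCube d) : DyadicCube d :=
  ⟨Q.n + 1, fun i => Int.fdiv (Q.m i) 2⟩

/-- The `k`-th dyadic ancestor of a dyadic cube. -/
def ancestor {d : ℕ} (k : ℕ) (Q : DyadicCube d) : DyadicCube d :=
  parent^[k] Q

end DyadicCube

namespace Fujii

open DyadicCube

variable {d : ℕ}

lemma two_zpow_pos (n : ℤ) : (0:ℝ) < 2 ^ n := zpow_pos two_pos n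

/-- coordinatewise characterization via floor -/
lemma coord_iff_floor {n k : ℤ} {x : ℝ} :
    ((k : ℝ) * 2 ^ n ≤ x ∧ x < ((k : ℝ) + 1) * 2 ^ n) ↔ k = ⌊x / 2 ^ n⌋ := by
  have h : (0:ℝ) < 2 ^ n := two_zpow_pos n
  rw [eq_comm, Int.floor_eq_iff]
  constructor
  · rintro ⟨h1, h2⟩
    constructor
    · rw [le_div_iff₀ h]; exact h1
    · rw [div_lt_iff₀ h]; push_cast; linarith
  · rintro ⟨h1, h2⟩
    rw [le_div_iff₀ h] at h1
    rw [div_lt_iff₀ h] at h2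
    constructor
    · exact h1
    · push_cast at h2 ⊢; linarith

lemma mem_toSet_iff {Q : DyadicCube d} {x : Fin d → ℝ} :
    x ∈ Q.toSet ↔ ∀ i, Q.m i = ⌊x i / 2 ^ Q.n⌋ := by
  constructor
  · intro h i; exact coord_iff_floor.1 (h i)
  · intro h i; exact coord_iff_floor.2 (h i)

/-- the dyadic cube of scale `n` containing `x` -/
def cubeAt (n : ℤ) (x : Fin d → ℝ) : DyadicCube d := ⟨n, fun i => ⌊x i / 2 ^ n⌋⟩

lemma mem_cubeAt (n : ℤ) (x : Fin d → ℝ) : x ∈ (cubeAt n x).toSet :=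
  mem_toSet_iff.2 fun _ => rfl

lemma toSet_subset_closedBall {Q : DyadicCube d} {x : Fin d → ℝ} (hx : x ∈ Q.toSet)
    {r : ℝ} (hr : (2:ℝ) ^ Q.n ≤ r) : Q.toSet ⊆ Metric.closedBall x r := by
  intro y hy
  have hr0 : 0 ≤ r := le_trans (two_zpow_pos Q.n).le hr
  rw [Metric.mem_closedBall, dist_pi_le_iff hr0]
  intro i
  have h1 := hx i
  have h2 := hy i
  rw [Real.dist_eq, abs_le]
  constructor <;> nlinarith [two_zpow_pos Q.n]

/-- nestedness: if two cubes intersect, the smaller is contained in the larger -/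
lemma toSet_subset_of_le {Q Q' : DyadicCube d} (hn : Q.n ≤ Q'.n) {x : Fin d → ℝ}
    (hx : x ∈ Q.toSet) (hx' : x ∈ Q'.toSet) : Q.toSet ⊆ Q'.toSet := by
  intro y hy i
  set e : ℕ := (Q'.n - Q.n).toNat with he
  have hee : Q'.n = Q.n + (e : ℤ) := by rw [he]; omega
  have h2e : (2:ℝ) ^ Q'.n = 2 ^ Q.n * (2:ℝ) ^ e := by
    rw [hee, zpow_add₀ (by norm_num : (2:ℝ) ≠ 0), zpow_natCast]
  have hp : (0:ℝ) < 2 ^ Q.n := two_zpow_pos Q.n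
  have hpe : (0:ℝ) < (2:ℝ) ^ e := by positivity
  set k := Q.m i
  set K := Q'.m i
  have hb1 : (K : ℝ) * 2 ^ Q'.n ≤ x i := (hx' i).1
  have hb2 : x i < ((K:ℝ) + 1) * 2 ^ Q'.n := (hx' i).2
  have ha1 : (k : ℝ) * 2 ^ Q.n ≤ x i := (hx i).1
  have ha2 : x i < ((k:ℝ) + 1) * 2 ^ Q.n := (hx i).2
  rw [h2e] at hb1 hb2
  have hr1 : (K:ℝ) * (2:ℝ) ^ e < (k:ℝ) + 1 := by nlinarith
  have hr2 : (k : ℝ) < ((K:ℝ) + 1) * (2:ℝ) ^ e := by nlinarith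
  have hZ1 : K * 2 ^ e ≤ k := by
    have h' : K * 2 ^ e < k + 1 := by exact_mod_cast hr1
    omega
  have hZ2 : k + 1 ≤ (K + 1) * 2 ^ e := by
    have h' : k < (K + 1) * 2 ^ e := by exact_mod_cast hr2
    omega
  have hc1 : (K:ℝ) * (2:ℝ) ^ e ≤ (k:ℝ) := by exact_mod_cast hZ1
  have hc2 : (k:ℝ) + 1 ≤ ((K:ℝ) + 1) * (2:ℝ) ^ e := by exact_mod_cast hZ2
  have hR1 : (K : ℝ) * 2 ^ Q'.n ≤ (k : ℝ) * 2 ^ Q.n := by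
    rw [h2e]; nlinarith [mul_le_mul_of_nonneg_right hc1 hp.le]
  have hR2 : ((k:ℝ) + 1) * 2 ^ Q.n ≤ ((K:ℝ) + 1) * 2 ^ Q'.n := by
    rw [h2e]; nlinarith [mul_le_mul_of_nonneg_right hc2 hp.le]
  exact ⟨le_trans hR1 (hy i).1, lt_of_lt_of_le (hy i).2 hR2⟩

lemma toSet_eq_of_eq_n {Q Q' : DyadicCube d} (hn : Q.n = Q'.n) {x : Fin d → ℝ}
    (hx : x ∈ Q.toSet) (hx' : x ∈ Q'.toSet) : Q.toSet = Q'.toSet := by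
  have hm : ∀ i, Q.m i = Q'.m i := by
    intro i
    rw [mem_toSet_iff] at hx hx'
    rw [hx i, hx' i, hn]
  ext y
  constructor <;> intro hy i
  · rw [← hn, ← hm i]; exact hy i
  · rw [hn, hm i]; exact hy i

/-- the lower-left corner belongs to the cube -/
lemma corner_mem (Q : DyadicCube d) : (fun i => (Q.m i : ℝ) * 2 ^ Q.n) ∈ Q.toSet := by
  intro i
  dsimp only
  refine ⟨le_refl _, ?_⟩
  have := two_zpow_pos Q.n
  nlinarith

lemma n_le_of_subset (hd : 0 < d) {Q Q' : DyadicCube d} (h : Q.toSet ⊆ Q'.toSet) :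
    Q.n ≤ Q'.n := by
  by_contra hlt
  push_neg at hlt
  set i : Fin d := ⟨0, hd⟩
  set c : Fin d → ℝ := fun j => (Q.m j : ℝ) * 2 ^ Q.n with hc
  have hcQ : c ∈ Q.toSet := corner_mem Q
  have hcQ' : c ∈ Q'.toSet := h hcQ
  have hp : (0:ℝ) < 2 ^ Q.n := two_zpow_pos Q.n
  have hp' : (0:ℝ) < 2 ^ Q'.n := two_zpow_pos Q'.n
  have hlt2 : (2:ℝ) ^ Q'.n < 2 ^ Q.n := by
    exact zpow_lt_zpow_right₀ one_lt_two hlt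
  set t : ℝ := ((Q'.m i : ℝ) + 1) * 2 ^ Q'.n - c i with ht
  have ht0 : 0 < t := by
    have := (hcQ' i).2; simp only [ht]; linarith
  have htle : t ≤ 2 ^ Q'.n := by
    have := (hcQ' i).1; simp only [ht]; linarith
  set z : Fin d → ℝ := Function.update c i (c i + t) with hz
  have hzQ : z ∈ Q.toSet := by
    intro j
    by_cases hij : j = i
    · subst hij
      rw [hz, Function.update_self]
      constructor
      · simp only [hc]; linarith
      · simp only [hc]; push_cast; nlinarith
    · rw [hz, Function.update_of_ne hij]
      exact hcQ j
  have hzQ' : z ∈ Q'.toSet := h hzQ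
  have := (hzQ' i).2
  rw [hz, Function.update_self] at this
  simp only [ht] at this
  linarith


lemma measurableSet_toSet (Q : DyadicCube d) : MeasurableSet Q.toSet := by
  have : Q.toSet = Set.pi univ
      (fun i => Ico ((Q.m i : ℝ) * 2 ^ Q.n) (((Q.m i : ℝ) + 1) * 2 ^ Q.n)) := by
    ext y; simp [DyadicCube.toSet, Set.mem_pi, mem_Ico]
  rw [this]
  exact MeasurableSet.univ_pi fun i => measurableSet_Ico

lemma interior_nonempty (Q : DyadicCube d) : (interior Q.toSet).Nonempty := by
  set U : Set (Fin d → ℝ) := Set.pi univ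
      (fun i => Ioo ((Q.m i : ℝ) * 2 ^ Q.n) (((Q.m i : ℝ) + 1) * 2 ^ Q.n)) with hU
  have hopen : IsOpen U := isOpen_set_pi finite_univ (fun i _ => isOpen_Ioo)
  have hsub : U ⊆ Q.toSet := by
    intro y hy i
    have := hy i (mem_univ i)
    exact ⟨this.1.le, this.2⟩
  have hne : U.Nonempty := by
    refine ⟨fun i => (Q.m i : ℝ) * 2 ^ Q.n + 2 ^ Q.n / 2, ?_⟩
    intro i _
    have := two_zpow_pos Q.n
    constructor
    · dsimp only; linarith
    · dsimp only; push_cast; nlinarith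
  obtain ⟨p, hp⟩ := hne
  exact ⟨p, interior_maximal hsub hopen hp⟩

lemma toSet_bounded_n {Q : DyadicCube d} (hd : 0 < d) {x : Fin d → ℝ} (hx : x ∈ Q.toSet)
    {r : ℝ} (hr : Q.toSet ⊆ Metric.closedBall x r) : (2:ℝ) ^ Q.n ≤ 4 * r := by
  set i : Fin d := ⟨0, hd⟩
  set c : Fin d → ℝ := fun j => (Q.m j : ℝ) * 2 ^ Q.n with hc
  have hcQ : c ∈ Q.toSet := corner_mem Q
  have hp : (0:ℝ) < 2 ^ Q.n := two_zpow_pos Q.n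
  set z : Fin d → ℝ := Function.update c i (c i + 2 ^ Q.n / 2) with hz
  have hzQ : z ∈ Q.toSet := by
    intro j
    by_cases hij : j = i
    · subst hij
      rw [hz, Function.update_self]
      constructor
      · simp only [hc]; linarith
      · simp only [hc]; push_cast; nlinarith
    · rw [hz, Function.update_of_ne hij]
      exact hcQ j
  have h1 : dist z x ≤ r := hr hzQ
  have h2 : dist c x ≤ r := hr hcQ
  have h3 : dist (z i) (c i) ≤ dist z c := dist_le_pi_dist z c i
  have h4 : dist z c ≤ dist z x + dist x c := dist_triangle z x c
  have h5 : dist (z i) (c i) = 2 ^ Q.n / 2 := by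
    rw [hz, Function.update_self, Real.dist_eq]
    rw [abs_of_nonneg (by linarith)]
    ring
  rw [dist_comm x c] at h4
  linarith

/-- The Vitali family of dyadic cubes. -/
def dyadicVitali (μ : Measure (Fin d → ℝ)) : VitaliFamily μ where
  setsAt x := {c | ∃ Q : DyadicCube d, x ∈ Q.toSet ∧ c = Q.toSet}
  measurableSet x c hc := by obtain ⟨Q, _, rfl⟩ := hc; exact measurableSet_toSet Q
  nonempty_interior x c hc := by obtain ⟨Q, _, rfl⟩ := hc; exact interior_nonempty Q
  nontrivial x ε hε := by
    obtain ⟨N, hN⟩ := exists_pow_lt_of_lt_one hε (by norm_num : (1:ℝ)/2 < 1)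
    refine ⟨(cubeAt (-(N:ℤ)) x).toSet, ⟨cubeAt (-(N:ℤ)) x, mem_cubeAt _ x, rfl⟩, ?_⟩
    refine toSet_subset_closedBall (mem_cubeAt _ x) ?_
    show (2:ℝ) ^ (-(N:ℤ)) ≤ ε
    have : (2:ℝ) ^ (-(N:ℤ)) = (1/2 : ℝ) ^ N := by
      rw [zpow_neg, ← zpow_natCast]
      simp [one_div, inv_zpow]
    rw [this]
    exact hN.le
  covering := by
    intro s f hfs hfine
    rcases Nat.eq_zero_or_pos d with hd | hd
    · -- degenerate case `d = 0`: every cube is `univ`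
      have huniv : ∀ Q : DyadicCube d, Q.toSet = univ := by
        intro Q; ext y; simp only [mem_univ, iff_true]
        intro i; exact absurd i.2 (by omega)
      rcases s.eq_empty_or_nonempty with rfl | ⟨x0, hx0⟩
      · exact ⟨∅, by simp, by simp [Set.PairwiseDisjoint, Set.Pairwise], by simp, by simp⟩
      · obtain ⟨c, hcf, _⟩ := hfine x0 hx0 1 one_pos
        obtain ⟨Qc, _, hcQ⟩ := hfs x0 hx0 hcf
        refine ⟨{(x0, c)}, ?_, ?_, ?_, ?_⟩
        · rintro p hp; rw [mem_singleton_iff] at hp; rw [hp]; exact hx0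
        · exact Set.pairwiseDisjoint_singleton _ _
        · rintro p hp; rw [mem_singleton_iff] at hp; rw [hp]; exact hcf
        · have : s \ ⋃ p ∈ ({(x0, c)} : Set ((Fin d → ℝ) × Set (Fin d → ℝ))), p.2 = ∅ := by
            rw [diff_eq_empty]
            intro y _
            simp only [mem_singleton_iff, iUnion_iUnion_eq_left]
            rw [hcQ, huniv Qc]; trivial
          rw [this]; exact measure_empty
    · -- main case
      have hch : ∀ x, ∃ Q : DyadicCube d, x ∈ s →
          Q.toSet ∈ f x ∧ x ∈ Q.toSet ∧ Q.toSet ⊆ Metric.closedBall x 1 := by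
        intro x
        by_cases hx : x ∈ s
        · obtain ⟨c, hcf, hcb⟩ := hfine x hx 1 one_pos
          obtain ⟨Qc, hxQ, rfl⟩ := hfs x hx hcf
          exact ⟨Qc, fun _ => ⟨hcf, hxQ, hcb⟩⟩
        · exact ⟨⟨0, 0⟩, fun h => absurd h hx⟩
      choose Q hQ using hch
      have hQf : ∀ x ∈ s, (Q x).toSet ∈ f x := fun x hx => (hQ x hx).1
      have hQx : ∀ x ∈ s, x ∈ (Q x).toSet := fun x hx => (hQ x hx).2.1
      have hQn : ∀ x ∈ s, (Q x).n ≤ 2 := by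
        intro x hx
        have h4 : (2:ℝ) ^ (Q x).n ≤ 4 * 1 := toSet_bounded_n hd (hQx x hx) (hQ x hx).2.2
        have : (2:ℝ) ^ (Q x).n ≤ 2 ^ (2:ℤ) := by norm_num at h4 ⊢; exact h4
        exact (zpow_le_zpow_iff_right₀ (by norm_num : (1:ℝ) < 2)).1 this
      set C : Set (DyadicCube d) := {q | ∃ x ∈ s, Q x = q} with hC
      have hCn : ∀ q ∈ C, q.n ≤ 2 := by
        rintro q ⟨x, hx, rfl⟩; exact hQn x hx
      -- existence of a maximal cube above each chosen cube
      have key : ∀ x ∈ s, ∃ q ∈ C, (Q x).toSet ⊆ q.toSet ∧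
          ∀ q' ∈ C, q.toSet ⊆ q'.toSet → q'.toSet = q.toSet := by
        intro x hx
        obtain ⟨n0, ⟨q, hqC, hsub, hqn⟩, hmax⟩ :=
          Int.exists_greatest_of_bdd (P := fun n => ∃ q ∈ C, (Q x).toSet ⊆ q.toSet ∧ q.n = n)
            ⟨2, by rintro z ⟨q, hqC, _, rfl⟩; exact hCn q hqC⟩
            ⟨(Q x).n, Q x, ⟨x, hx, rfl⟩, subset_rfl, rfl⟩
        refine ⟨q, hqC, hsub, ?_⟩
        intro q' hq' hss
        have hxq : x ∈ q.toSet := hsub (hQx x hx)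
        have hxq' : x ∈ q'.toSet := hss hxq
        have h1 : q.n ≤ q'.n := n_le_of_subset hd hss
        have h2 : q'.n ≤ n0 := hmax q'.n ⟨q', hq', hsub.trans hss, rfl⟩
        have hnn : q.n = q'.n := le_antisymm h1 (by omega)
        exact (toSet_eq_of_eq_n hnn hxq hxq').symm
      -- the collection of maximal cube sets
      set M : Set (Set (Fin d → ℝ)) :=
        {c | ∃ q ∈ C, c = q.toSet ∧ ∀ q' ∈ C, c ⊆ q'.toSet → q'.toSet = c} with hM
      have hMw : ∀ c, ∃ x, c ∈ M → x ∈ s ∧ c ∈ f x := by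
        intro c
        by_cases hc : c ∈ M
        · obtain ⟨q, ⟨x, hx, hQxq⟩, rfl, _⟩ := hc
          exact ⟨x, fun _ => ⟨hx, by rw [← hQxq]; exact hQf x hx⟩⟩
        · exact ⟨Classical.arbitrary _, fun h => absurd h hc⟩
      choose w hw using hMw
      refine ⟨(fun c => (w c, c)) '' M, ?_, ?_, ?_, ?_⟩
      · rintro p ⟨c, hc, rfl⟩; exact (hw c hc).1
      · rintro p₁ ⟨c₁, hc₁, rfl⟩ p₂ ⟨c₂, hc₂, rfl⟩ hne
        have hcc : c₁ ≠ c₂ := by rintro rfl; exact hne rfl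
        show Disjoint c₁ c₂
        rw [Set.disjoint_left]
        intro y hy₁ hy₂
        obtain ⟨q₁, hq₁C, rfl, hmax₁⟩ := hc₁
        obtain ⟨q₂, hq₂C, rfl, hmax₂⟩ := hc₂
        rcases le_total q₁.n q₂.n with h | h
        · exact hcc (hmax₁ q₂ hq₂C (toSet_subset_of_le h hy₁ hy₂)).symm
        · exact hcc (hmax₂ q₁ hq₁C (toSet_subset_of_le h hy₂ hy₁))
      · rintro p ⟨c, hc, rfl⟩; exact (hw c hc).2
      · have hcov : s ⊆ ⋃ p ∈ (fun c => (w c, c)) '' M, p.2 := by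
          intro x hx
          obtain ⟨q, hqC, hsub, hqmax⟩ := key x hx
          have hcM : q.toSet ∈ M := ⟨q, hqC, rfl, hqmax⟩
          refine mem_biUnion (mem_image_of_mem _ hcM) ?_
          exact hsub (hQx x hx)
        rw [diff_eq_empty.mpr hcov]
        exact measure_empty

end Fujii

/-- `m` is a median of `f` on `Q` (w.r.t. `μ`). -/
def IsMedian {d : ℕ} (μ : Measure (Fin d → ℝ)) (f : (Fin d → ℝ) → ℝ)
    (Q : Set (Fin d → ℝ)) (m : ℝ) : Prop :=
  μ (Q ∩ {x | m < f x}) ≤ μ Q / 2 ∧ μ (Q ∩ {x | f x < m}) ≤ μ Q / 2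

/-- The relative median oscillation `r_λ(f; Q)` of `f` about zero on `Q`. -/
def rOsc {d : ℕ} (μ : Measure (Fin d → ℝ)) (lam : ℝ) (f : (Fin d → ℝ) → ℝ)
    (Q : Set (Fin d → ℝ)) : ℝ :=
  sInf {r : ℝ | 0 ≤ r ∧ μ (Q ∩ {x | r < |f x|}) ≤ ENNReal.ofReal lam * μ Q}

/-- The median oscillation `ω_λ(f; Q)`. -/
def mOsc {d : ℕ} (μ : Measure (Fin d → ℝ)) (lam : ℝ) (f : (Fin d → ℝ) → ℝ)
    (Q : Set (Fin d → ℝ)) : ℝ :=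
  ⨅ c : ℝ, rOsc μ lam (fun x => f x - c) Q

/-- The average `⟨f⟩_Q = (1/μ(Q)) ∫_Q f dμ`. -/
def avg {d : ℕ} (μ : Measure (Fin d → ℝ)) (f : (Fin d → ℝ) → ℝ)
    (Q : Set (Fin d → ℝ)) : ℝ :=
  (∫ x in Q, f x ∂μ) / (μ Q).toReal

/-- Fujii's lemma: for μ-a.e. `x`, any choice of medians over dyadic cubes
containing `x` converges to `f x` as the side length tends to `0`. -/
theorem fujii_lemma {d : ℕ} (μ : Measure (Fin d → ℝ)) [IsLocallyFiniteMeasure μ]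
    (f : (Fin d → ℝ) → ℝ) (hf : Measurable f) :
    ∀ᵐ x ∂μ, ∀ ε : ℝ, 0 < ε → ∃ N : ℕ,
      ∀ Q : DyadicCube d, x ∈ Q.toSet → Q.n ≤ -(N : ℤ) → 0 < μ Q.toSet →
        ∀ m : ℝ, IsMedian μ f Q.toSet m → |m - f x| ≤ ε := by
  set v := Fujii.dyadicVitali (d := d) μ with hv
  have hAB : ∀ (p : ℚ × ℚ), ∀ᵐ x ∂μ,
      Filter.Tendsto (fun c => μ (f ⁻¹' (Ioo (p.1:ℝ) (p.2:ℝ)) ∩ c) / μ c) (v.filterAt x)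
        (nhds ((f ⁻¹' (Ioo (p.1:ℝ) (p.2:ℝ))).indicator 1 x)) :=
    fun p => v.ae_tendsto_measure_inter_div_of_measurableSet (hf measurableSet_Ioo)
  rw [← ae_all_iff] at hAB
  filter_upwards [hAB] with x hx
  intro ε hε
  obtain ⟨a, ha1, ha2⟩ := exists_rat_btwn (show f x - ε < f x by linarith)
  obtain ⟨b, hb1, hb2⟩ := exists_rat_btwn (show f x < f x + ε by linarith)
  set A := f ⁻¹' (Ioo (a:ℝ) (b:ℝ)) with hA
  have hxA : x ∈ A := ⟨ha2, hb1⟩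
  have hten := hx (a, b)
  rw [show ((a,b).1 : ℝ) = (a:ℝ) from rfl, show ((a,b).2 : ℝ) = (b:ℝ) from rfl, ← hA,
    indicator_of_mem hxA, Pi.one_apply] at hten
  have hev : ∀ᶠ c in v.filterAt x, 1/2 < μ (A ∩ c) / μ c :=
    hten.eventually_const_lt (by norm_num : (1:ENNReal)/2 < 1)
  rw [VitaliFamily.eventually_filterAt_iff] at hev
  obtain ⟨δ, hδ, hδev⟩ := hev
  obtain ⟨N, hN⟩ := exists_pow_lt_of_lt_one hδ (by norm_num : (1:ℝ)/2 < 1)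
  refine ⟨N, ?_⟩
  intro Q hxQ hQn hQpos m hmed
  obtain ⟨hm1, hm2⟩ := hmed
  have hsub : Q.toSet ⊆ Metric.closedBall x δ := by
    refine Fujii.toSet_subset_closedBall hxQ ?_
    calc (2:ℝ)^Q.n ≤ 2^(-(N:ℤ)) := zpow_le_zpow_right₀ one_le_two hQn
    _ = (1/2:ℝ)^N := by
        rw [zpow_neg, ← zpow_natCast]
        simp [one_div, inv_zpow]
    _ ≤ δ := hN.le
  have hgt : 1/2 < μ (A ∩ Q.toSet) / μ Q.toSet := hδev Q.toSet ⟨Q, hxQ, rfl⟩ hsub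
  have hhalf : μ Q.toSet / 2 < μ (A ∩ Q.toSet) := by
    have h' := ENNReal.mul_lt_of_lt_div hgt
    calc μ Q.toSet / 2 = 1/2 * μ Q.toSet := by
          rw [div_eq_mul_inv, one_div, mul_comm]
    _ < μ (A ∩ Q.toSet) := h'
  have ham : (a:ℝ) ≤ m := by
    by_contra h
    push_neg at h
    have hss : A ∩ Q.toSet ⊆ Q.toSet ∩ {y | m < f y} := by
      rintro y ⟨⟨hy1, _⟩, hyQ⟩
      exact ⟨hyQ, lt_trans h hy1⟩
    exact absurd (lt_of_lt_of_le hhalf (le_trans (measure_mono hss) hm1)) (lt_irrefl _)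
  have hbm : m ≤ (b:ℝ) := by
    by_contra h
    push_neg at h
    have hss : A ∩ Q.toSet ⊆ Q.toSet ∩ {y | f y < m} := by
      rintro y ⟨⟨_, hy2⟩, hyQ⟩
      exact ⟨hyQ, lt_trans hy2 h⟩
    exact absurd (lt_of_lt_of_le hhalf (le_trans (measure_mono hss) hm2)) (lt_irrefl _)
  rw [abs_le]
  constructor <;> linarith
end
end

section
/- Exponential integrability from sparse domination: if |g| ≤ C ∑_{S ∈ S} 1_S pointwise μ-a.e. on Q, where S is a collection of dyadic subcubes of Q satisfying μ({∑_{S∈S} 1_S ≥ k}) ≤ 2^{-(k−1)} μ(Q) for all k ≥ 1, then (1/μ(Q)) ∫_Q exp(c|g|/C) dμ ≤ C' for the absolute constants c = (log 2)/2 and some absolute C'. -/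
/-!
Sparse domination gives `exp ((log 2 / 2) |g| / C) ≤ √2 ^ N` for the counting function
`N = ∑_{S ∈ 𝒮} 1_S`. Cutting according to `⌊N⌋`, `√2 ^ N ≤ √2 + ∑_k √2 ^ (k + 2) 1_{N ≥ k + 1}`,
and the decay `μ {N ≥ k + 1} ≤ 2 ^ (-k) μ Q` turns the integral into a geometric series of ratio
`√2 / 2`, with sum `C' = 4 + 3√2`.
-/

open MeasureTheory Set ENNReal

noncomputable section

lemma DyadicCube.measurableSet_toSet {d : ℕ} (Q : DyadicCube d) : MeasurableSet Q.toSet := by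
  have h : Q.toSet = ⋂ i, (fun x : Fin d → ℝ => x i) ⁻¹'
      Ico ((Q.m i : ℝ) * 2 ^ Q.n) (((Q.m i : ℝ) + 1) * 2 ^ Q.n) := by
    ext x; simp [DyadicCube.toSet]
  rw [h]
  exact .iInter fun i => measurable_pi_apply i measurableSet_Ico

lemma ofReal_rpow_le_add_tsum_indicator {a : ℝ} (ha : 1 ≤ a) (t : ℝ) :
    ENNReal.ofReal (a ^ t) ≤ ENNReal.ofReal a +
      ∑' k : ℕ, (Ici ((k : ℝ) + 1)).indicator (fun _ => ENNReal.ofReal a ^ (k + 2)) t := by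
  rcases lt_or_ge t 1 with ht | ht
  · refine le_add_right (ENNReal.ofReal_le_ofReal ?_)
    simpa using Real.rpow_le_rpow_of_exponent_le ha ht.le
  · obtain ⟨k, hk⟩ : ∃ k : ℕ, ⌊t⌋₊ = k + 1 :=
      ⟨⌊t⌋₊ - 1, by have := (Nat.one_le_floor_iff t).2 ht; omega⟩
    have h_floor : t ∈ Ici ((k : ℝ) + 1) := by
      have := Nat.floor_le (a := t) (by linarith); rw [hk] at this; exact_mod_cast this
    have h_ceil : t ≤ ((k + 2 : ℕ) : ℝ) := by
      have := Nat.lt_floor_add_one t; rw [hk] at this; push_cast at this ⊢; linarith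
    calc ENNReal.ofReal (a ^ t) ≤ ENNReal.ofReal a ^ (k + 2) := by
          rw [← ENNReal.ofReal_pow (by linarith), ← Real.rpow_natCast]
          exact ENNReal.ofReal_le_ofReal (Real.rpow_le_rpow_of_exponent_le ha h_ceil)
      _ = (Ici ((k : ℝ) + 1)).indicator (fun _ => ENNReal.ofReal a ^ (k + 2)) t :=
          (indicator_of_mem h_floor (fun _ => ENNReal.ofReal a ^ (k + 2))).symm
      _ ≤ _ := le_add_left (ENNReal.le_tsum k)

theorem setLIntegral_ofReal_rpow_le_of_measure_superlevel_le {α : Type*} [MeasurableSpace α]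
    {μ : Measure α} {s : Set α} {N : α → ℝ} (hN : Measurable N) {a : ℝ} (ha : 1 ≤ a) {r : ℝ≥0∞}
    (h_level : ∀ k : ℕ, μ {x ∈ s | (k : ℝ) + 1 ≤ N x} ≤ r ^ k * μ s) :
    ∫⁻ x in s, ENNReal.ofReal (a ^ N x) ∂μ ≤
      (ENNReal.ofReal a + ENNReal.ofReal a ^ 2 * (1 - ENNReal.ofReal a * r)⁻¹) * μ s := by
  have h_meas (k : ℕ) : MeasurableSet (N ⁻¹' Ici ((k : ℝ) + 1)) := hN measurableSet_Ici
  calc ∫⁻ x in s, ENNReal.ofReal (a ^ N x) ∂μ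
      ≤ ∫⁻ x in s, ENNReal.ofReal a + ∑' k : ℕ,
          (N ⁻¹' Ici ((k : ℝ) + 1)).indicator (fun _ => ENNReal.ofReal a ^ (k + 2)) x ∂μ :=
        lintegral_mono fun x => ofReal_rpow_le_add_tsum_indicator ha (N x)
    _ = ENNReal.ofReal a * μ s +
          ∑' k : ℕ, ENNReal.ofReal a ^ (k + 2) * μ {x ∈ s | (k : ℝ) + 1 ≤ N x} := by
        rw [lintegral_add_left measurable_const, setLIntegral_const,
          lintegral_tsum fun k => (measurable_const.indicator (h_meas k)).aemeasurable]
        congr 1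
        refine tsum_congr fun k => ?_
        rw [lintegral_indicator_const (h_meas k), Measure.restrict_apply (h_meas k), inter_comm]
        rfl
    _ ≤ ENNReal.ofReal a * μ s + ∑' k : ℕ, ENNReal.ofReal a ^ (k + 2) * (r ^ k * μ s) := by
        gcongr with k
        exact h_level k
    _ = (ENNReal.ofReal a + ENNReal.ofReal a ^ 2 * (1 - ENNReal.ofReal a * r)⁻¹) * μ s := by
        rw [← ENNReal.tsum_geometric, ← ENNReal.tsum_mul_left, add_mul, ← ENNReal.tsum_mul_right]
        congr 1
        exact tsum_congr fun k => by ring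

lemma ofReal_sqrt_two_add_geometric :
    ENNReal.ofReal √2 + ENNReal.ofReal √2 ^ 2 * (1 - ENNReal.ofReal √2 * 2⁻¹)⁻¹ =
      ENNReal.ofReal (4 + 3 * √2) := by
  have h_sq : √2 ^ 2 = 2 := Real.sq_sqrt zero_le_two
  have h_lt : √2 / 2 < 1 := by nlinarith [Real.sqrt_nonneg 2]
  have h_half : ENNReal.ofReal √2 * 2⁻¹ = ENNReal.ofReal (√2 / 2) := by
    rw [ENNReal.ofReal_div_of_pos two_pos, ENNReal.ofReal_ofNat, div_eq_mul_inv]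
  rw [h_half, ← ENNReal.ofReal_one, ← ENNReal.ofReal_sub _ (by positivity),
    ← ENNReal.ofReal_inv_of_pos (by linarith), ← ENNReal.ofReal_pow (Real.sqrt_nonneg 2),
    ← ENNReal.ofReal_mul (by positivity), ← ENNReal.ofReal_add (by positivity) (by positivity)]
  congr 1
  have h_pos : 0 < 2 - √2 := by linarith
  field_simp
  nlinarith [h_sq]

/-- exponential integrability from sparse domination, with
`c = (log 2)/2` and some absolute constant `C'`. -/
theorem exp_integrability_from_sparse_domination :
    ∃ C' : ℝ, 0 < C' ∧
      ∀ (d : ℕ) (μ : Measure (Fin d → ℝ)), IsLocallyFiniteMeasure μ →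
      ∀ (Q : DyadicCube d), 0 < μ Q.toSet → μ Q.toSet < ⊤ →
      ∀ (g : (Fin d → ℝ) → ℝ), Measurable g →
      ∀ (C : ℝ), 0 < C →
      ∀ (𝒮 : Set (DyadicCube d)), 𝒮.Countable →
        (∀ S ∈ 𝒮, (S : DyadicCube d).toSet ⊆ Q.toSet) →
        (∀ᵐ x ∂μ, x ∈ Q.toSet →
          |g x| ≤ C * ∑' S : 𝒮, (S : DyadicCube d).toSet.indicator (fun _ => (1 : ℝ)) x) →
        (∀ k : ℕ, 1 ≤ k →
          μ {x | x ∈ Q.toSet ∧ (k : ℝ) ≤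
              ∑' S : 𝒮, (S : DyadicCube d).toSet.indicator (fun _ => (1 : ℝ)) x} ≤
            (2 : ℝ≥0∞)⁻¹ ^ (k - 1) * μ Q.toSet) →
        ∫ x in Q.toSet, Real.exp ((Real.log 2 / 2) * |g x| / C) ∂μ ≤
          C' * (μ Q.toSet).toReal := by
  refine ⟨4 + 3 * √2, by positivity, ?_⟩
  intro d μ _ Q _ hQ_fin g hg C hC 𝒮 h𝒮 _ h_dom h_level
  have : Countable 𝒮 := h𝒮.to_subtype
  set N : (Fin d → ℝ) → ℝ :=
    fun x => ∑' S : 𝒮, (S : DyadicCube d).toSet.indicator (fun _ => 1) x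
  have hN : Measurable N :=
    .tsum fun S => measurable_const.indicator S.1.measurableSet_toSet
  have h_exp_le : ∀ᵐ x ∂μ.restrict Q.toSet,
      ENNReal.ofReal (Real.exp (Real.log 2 / 2 * |g x| / C)) ≤ ENNReal.ofReal (√2 ^ N x) := by
    rw [ae_restrict_iff' Q.measurableSet_toSet]
    filter_upwards [h_dom] with x hx hxQ
    rw [Real.rpow_def_of_pos (by positivity), Real.log_sqrt zero_le_two]
    gcongr
    rw [mul_div_assoc]
    gcongr
    exact (div_le_iff₀' hC).2 (hx hxQ)
  have h_lintegral : ∫⁻ x in Q.toSet, ENNReal.ofReal (Real.exp (Real.log 2 / 2 * |g x| / C)) ∂μ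
      ≤ ENNReal.ofReal (4 + 3 * √2) * μ Q.toSet :=
    calc _ ≤ ∫⁻ x in Q.toSet, ENNReal.ofReal (√2 ^ N x) ∂μ := lintegral_mono_ae h_exp_le
      _ ≤ _ := ofReal_sqrt_two_add_geometric ▸
          setLIntegral_ofReal_rpow_le_of_measure_superlevel_le hN (Real.one_le_sqrt.2 one_le_two)
            fun k => by simpa using h_level (k + 1) k.succ_pos
  rw [integral_eq_lintegral_of_nonneg_ae (.of_forall fun x => (Real.exp_pos _).le)
    (by fun_prop)]
  calc _ ≤ (ENNReal.ofReal (4 + 3 * √2) * μ Q.toSet).toReal :=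
        ENNReal.toReal_mono (by finiteness) h_lintegral
    _ = _ := by rw [ENNReal.toReal_mul, ENNReal.toReal_ofReal (by positivity)]
end
end

section
/- Dyadic martingale John–Nirenberg inequality: there exist absolute constants c, C > 0 such that for every locally finite Borel measure μ, every f with ‖f‖_{BMO(μ)} < ∞, and every dyadic cube Q with 0 < μ(Q) < ∞, one has (1/μ(Q)) ∫_Q exp(c |f − ⟨f⟩_{Q̂}| / ‖f‖_{BMO(μ)}) dμ ≤ C, where Q̂ is the dyadic parent of Q. -/
/-!
Calderón–Zygmund stopping time. With `N` the BMO norm and `a = ⟨f⟩_{Q̂}` we have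
`∫_Q |f - a| ≤ N μ(Q)`. The maximal dyadic subcubes `S ⊆ Q` with `∫_S |f - a| > 2N μ(S)` are
disjoint and of total measure at most `μ(Q)/2`. Their parents are not selected, so
`|⟨f⟩_{Ŝ} - a| ≤ 2N`, while off their union `|f - a| ≤ 2N` almost everywhere by Lebesgue
differentiation along dyadic cubes. As `∫_S |f - ⟨f⟩_{Ŝ}| ≤ N μ(S)`, induction on `k` gives
`μ(Q ∩ {|f - a| > 3Nk}) ≤ 2⁻ᵏ μ(Q)`, and summing over level sets gives exponential integrability.
-/

open MeasureTheory Set ENNReal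

noncomputable section

/-- The dyadic martingale BMO norm of `f`. -/
def bmoNorm {d : ℕ} (μ : Measure (Fin d → ℝ)) (f : (Fin d → ℝ) → ℝ) : ℝ :=
  sSup {t : ℝ | ∃ Q : DyadicCube d, 0 < μ Q.toSet ∧
    t = (∫ x in Q.toSet, |f x - avg μ f Q.parent.toSet| ∂μ) / (μ Q.toSet).toReal}

open Filter Metric Topology Function

lemma abs_sub_le_setAverage_add {α : Type*} [MeasurableSpace α] {μ : Measure α} {s : Set α}
    {f : α → ℝ} (hf : IntegrableOn f s μ) (h0 : μ s ≠ 0) (hs : μ s ≠ ∞) (x : α) (a : ℝ) :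
    |f x - a| ≤ ⨍ y in s, |f y - a| ∂μ + ⨍ y in s, ‖f y - f x‖ ∂μ := by
  have hfa : IntegrableOn (fun y => |f y - a|) s μ := (hf.sub (integrableOn_const hs)).abs
  have hfx : IntegrableOn (fun y => ‖f y - f x‖) s μ := (hf.sub (integrableOn_const hs)).norm
  have hμs : 0 < μ.real s := ENNReal.toReal_pos h0 hs
  rw [setAverage_eq, setAverage_eq, smul_eq_mul, smul_eq_mul, ← mul_add, le_inv_mul_iff₀ hμs,
    ← integral_add hfa hfx, ← smul_eq_mul, ← setIntegral_const]
  refine integral_mono (integrableOn_const hs) (hfa.add hfx) fun y => ?_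
  calc |f x - a| = |(f y - a) - (f y - f x)| := by congr 1; ring
    _ ≤ |f y - a| + ‖f y - f x‖ := abs_sub _ _

lemma ofReal_mul_tsum_measure_le_ofReal_setIntegral {α ι : Type*} [MeasurableSpace α]
    [Countable ι] {μ : Measure α} {g : α → ℝ} {t : Set α} {s : ι → Set α}
    (hg : IntegrableOn g t μ) (hg0 : ∀ x, 0 ≤ g x) (ht : μ t ≠ ∞)
    (hs : ∀ i, MeasurableSet (s i)) (hst : ∀ i, s i ⊆ t) (hdisj : Pairwise (Disjoint on s))
    {c : ℝ} (hc : 0 ≤ c) (h : ∀ i, c * μ.real (s i) ≤ ∫ x in s i, g x ∂μ) :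
    ENNReal.ofReal c * ∑' i, μ (s i) ≤ ENNReal.ofReal (∫ x in t, g x ∂μ) := by
  have hlint : ∀ u ⊆ t,
      ENNReal.ofReal (∫ x in u, g x ∂μ) = ∫⁻ x in u, ENNReal.ofReal (g x) ∂μ := fun u hu =>
    ofReal_integral_eq_lintegral_ofReal (hg.mono_set hu) (ae_of_all _ hg0)
  rw [hlint t subset_rfl, ← ENNReal.tsum_mul_left]
  calc ∑' i, ENNReal.ofReal c * μ (s i)
      ≤ ∑' i, ∫⁻ x in s i, ENNReal.ofReal (g x) ∂μ := ENNReal.tsum_le_tsum fun i => by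
        rw [← hlint _ (hst i), ← ENNReal.ofReal_toReal (measure_ne_top_of_subset (hst i) ht),
          ← ENNReal.ofReal_mul hc]
        exact ENNReal.ofReal_le_ofReal (h i)
    _ = ∫⁻ x in ⋃ i, s i, ENNReal.ofReal (g x) ∂μ := (lintegral_iUnion hs hdisj _).symm
    _ ≤ ∫⁻ x in t, ENNReal.ofReal (g x) ∂μ := lintegral_mono_set (iUnion_subset hst)

lemma abs_avg_sub_le {d : ℕ} {μ : Measure (Fin d → ℝ)} {f : (Fin d → ℝ) → ℝ}
    {s : Set (Fin d → ℝ)} (hf : IntegrableOn f s μ) (h0 : μ s ≠ 0) (hs : μ s ≠ ∞) {a lam : ℝ}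
    (h : ∫ x in s, |f x - a| ∂μ ≤ lam * μ.real s) : |avg μ f s - a| ≤ lam := by
  have hμs : 0 < μ.real s := ENNReal.toReal_pos h0 hs
  have havg : avg μ f s - a = (∫ x in s, (f x - a) ∂μ) / μ.real s := by
    rw [integral_sub hf (integrableOn_const hs), setIntegral_const, smul_eq_mul, avg,
      ← measureReal_def]
    field_simp
  rw [havg, abs_div, abs_of_pos hμs, div_le_iff₀ hμs]
  exact abs_integral_le_integral_abs.trans h

lemma exp_le_of_natFloor_eq {y : ℝ} {j : ℕ} (hy : ⌊y⌋₊ = j) :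
    Real.exp (Real.log 2 / 2 * y) ≤ (3 / 2) ^ (j + 1) := by
  have hlog : Real.log 2 / 2 ≤ Real.log (3 / 2) := by
    have : Real.log 2 ≤ Real.log ((3 / 2) ^ 2) := Real.log_le_log two_pos (by norm_num)
    rw [Real.log_pow] at this
    linarith
  have hy : y ≤ j + 1 := (hy ▸ Nat.lt_floor_add_one y).le
  rw [← Real.exp_log (by norm_num : (0 : ℝ) < 3 / 2), ← Real.exp_nat_mul]
  refine Real.exp_le_exp.2 ?_
  calc Real.log 2 / 2 * y ≤ Real.log 2 / 2 * (j + 1) :=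
        mul_le_mul_of_nonneg_left hy (div_nonneg (Real.log_nonneg one_le_two) zero_le_two)
    _ ≤ ↑(j + 1) * Real.log (3 / 2) := by
        rw [mul_comm, Nat.cast_succ]
        exact mul_le_mul_of_nonneg_left hlog (by positivity)

lemma measure_natFloor_eq_le {α : Type*} [MeasurableSpace α] {ν : Measure α} {u : α → ℝ}
    (hdist : ∀ k : ℕ, ν {x | k < u x} ≤ 2⁻¹ ^ k * ν univ) (j : ℕ) :
    ν {x | ⌊u x⌋₊ = j} ≤ ENNReal.ofReal (2 * 2⁻¹ ^ j) * ν univ := by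
  rcases j with _ | i
  · calc ν {x | ⌊u x⌋₊ = 0} ≤ 1 * ν univ := by rw [one_mul]; exact measure_mono (subset_univ _)
      _ ≤ ENNReal.ofReal (2 * 2⁻¹ ^ 0) * ν univ := by gcongr; norm_num
  · calc ν {x | ⌊u x⌋₊ = i + 1} ≤ ν {x | i < u x} :=
          measure_mono fun x (hx : ⌊u x⌋₊ = i + 1) => Nat.lt_of_lt_floor (show i < ⌊u x⌋₊ by omega)
      _ ≤ 2⁻¹ ^ i * ν univ := hdist i
      _ = ENNReal.ofReal (2 * 2⁻¹ ^ (i + 1)) * ν univ := by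
        rw [show (2 : ℝ) * 2⁻¹ ^ (i + 1) = 2⁻¹ ^ i by ring, ENNReal.ofReal_pow (by norm_num),
          ENNReal.ofReal_inv_of_pos two_pos, ENNReal.ofReal_ofNat]

/-- Summing `(3/2)^(j+1) ⋅ 2 ⋅ 2⁻¹ ^ j = 3 (3/4)^j` over the level sets `{⌊u⌋₊ = j}` gives `12`. -/
theorem lintegral_exp_le_of_measure_lt_le {α : Type*} [MeasurableSpace α] {ν : Measure α}
    {u : α → ℝ} (hu : AEMeasurable u ν) (hdist : ∀ k : ℕ, ν {x | k < u x} ≤ 2⁻¹ ^ k * ν univ) :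
    ∫⁻ x, ENNReal.ofReal (Real.exp (Real.log 2 / 2 * u x)) ∂ν ≤ 12 * ν univ := by
  set A : ℕ → Set α := fun j => {x | ⌊u x⌋₊ = j}
  have hA_meas : ∀ j, NullMeasurableSet (A j) ν := fun j =>
    (Nat.measurable_floor.comp_aemeasurable hu).nullMeasurable (measurableSet_singleton j)
  have hA_disj : Pairwise (AEDisjoint ν on A) := fun i j hij =>
    Disjoint.aedisjoint (disjoint_left.2 fun x hi hj => hij (hi.symm.trans hj))
  have hA_cover : ⋃ j, A j = univ := eq_univ_of_forall fun x => mem_iUnion.2 ⟨_, rfl⟩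
  calc ∫⁻ x, ENNReal.ofReal (Real.exp (Real.log 2 / 2 * u x)) ∂ν
      = ∑' j, ∫⁻ x in A j, ENNReal.ofReal (Real.exp (Real.log 2 / 2 * u x)) ∂ν := by
        rw [← lintegral_iUnion₀ hA_meas hA_disj, hA_cover, Measure.restrict_univ]
    _ ≤ ∑' j, ENNReal.ofReal ((3 / 2) ^ (j + 1)) * ν (A j) := ENNReal.tsum_le_tsum fun j =>
        (setLIntegral_mono_ae aemeasurable_const (ae_of_all _ fun x hx =>
          ENNReal.ofReal_le_ofReal (exp_le_of_natFloor_eq hx))).trans (setLIntegral_const _ _).le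
    _ ≤ ∑' j, ENNReal.ofReal (3 * (3 / 4) ^ j) * ν univ := ENNReal.tsum_le_tsum fun j => by
        have : (3 : ℝ) * (3 / 4) ^ j = (3 / 2) ^ (j + 1) * (2 * 2⁻¹ ^ j) := by
          rw [show (3 / 4 : ℝ) = 3 / 2 * 2⁻¹ by norm_num, mul_pow]
          ring
        rw [this, ENNReal.ofReal_mul (by positivity), mul_assoc]
        gcongr
        exact measure_natFloor_eq_le hdist j
    _ = 12 * ν univ := by
        rw [ENNReal.tsum_mul_right, ← ENNReal.ofReal_tsum_of_nonneg (fun _ => by positivity)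
          ((summable_geometric_of_lt_one (by norm_num) (by norm_num)).mul_left 3),
          tsum_mul_left, tsum_geometric_of_lt_one (by norm_num) (by norm_num)]
        norm_num

namespace DyadicCube

variable {d : ℕ}

instance : Countable (DyadicCube d) :=
  Function.Injective.countable (f := fun Q : DyadicCube d => (Q.n, Q.m))
    fun ⟨_, _⟩ ⟨_, _⟩ h => by simpa using h

lemma mem_toSet_iff {Q : DyadicCube d} {x : Fin d → ℝ} :
    x ∈ Q.toSet ↔ ∀ i, ⌊x i / 2 ^ Q.n⌋ = Q.m i := by
  have h2 : (0 : ℝ) < 2 ^ Q.n := by positivity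
  simp only [toSet, mem_ofPred_eq, Int.floor_eq_iff, le_div_iff₀ h2, div_lt_iff₀ h2]

def cubeOf (n : ℤ) (x : Fin d → ℝ) : DyadicCube d := ⟨n, fun i => ⌊x i / 2 ^ n⌋⟩

lemma mem_cubeOf (n : ℤ) (x : Fin d → ℝ) : x ∈ (cubeOf n x).toSet :=
  mem_toSet_iff.2 fun _ => rfl

lemma eq_cubeOf_of_mem {Q : DyadicCube d} {x : Fin d → ℝ} (hx : x ∈ Q.toSet) :
    Q = cubeOf Q.n x := by
  obtain ⟨n, m⟩ := Q
  simp only [cubeOf, mk.injEq, true_and]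
  exact funext fun i => (mem_toSet_iff.1 hx i).symm

lemma eq_of_mem_of_mem {P Q : DyadicCube d} {x : Fin d → ℝ} (hP : x ∈ P.toSet)
    (hQ : x ∈ Q.toSet) (h : P.n = Q.n) : P = Q := by
  rw [eq_cubeOf_of_mem hP, eq_cubeOf_of_mem hQ, h]

lemma parent_cubeOf (n : ℤ) (x : Fin d → ℝ) : (cubeOf n x).parent = cubeOf (n + 1) x := by
  simp only [parent, cubeOf, mk.injEq, true_and]
  funext i
  rw [Int.fdiv_eq_ediv_of_nonneg _ zero_le_two, zpow_add_one₀ two_ne_zero, ← div_div,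
    ← Nat.cast_ofNat (R := ℝ), Int.floor_div_natCast]
  rfl

lemma subset_parent (Q : DyadicCube d) : Q.toSet ⊆ Q.parent.toSet := fun x hx => by
  rw [eq_cubeOf_of_mem hx, parent_cubeOf]
  exact mem_cubeOf _ x

lemma cubeOf_subset_cubeOf (x : Fin d → ℝ) {k l : ℤ} (h : k ≤ l) :
    (cubeOf k x).toSet ⊆ (cubeOf l x).toSet := by
  induction l, h using Int.leInduction with
  | base => rfl
  | succ l _ ih => exact ih.trans (parent_cubeOf l x ▸ subset_parent _)

lemma toSet_subset_of_mem_of_mem {P Q : DyadicCube d} {x : Fin d → ℝ} (hP : x ∈ P.toSet)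
    (hQ : x ∈ Q.toSet) (h : P.n ≤ Q.n) : P.toSet ⊆ Q.toSet := by
  rw [eq_cubeOf_of_mem hP, eq_cubeOf_of_mem hQ]
  exact cubeOf_subset_cubeOf x h

lemma toSet_nonempty (Q : DyadicCube d) : Q.toSet.Nonempty :=
  ⟨fun i => Q.m i * 2 ^ Q.n, mem_toSet_iff.2 fun i => by
    simp [mul_div_assoc, div_self (zpow_ne_zero Q.n (two_ne_zero (α := ℝ)))]⟩

lemma toSet_eq_pi (Q : DyadicCube d) : Q.toSet =
    univ.pi fun i => Ico ((Q.m i : ℝ) * 2 ^ Q.n) ((Q.m i + 1) * 2 ^ Q.n) := by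
  ext x
  simp [toSet]

lemma measurableSet_toSet_s11 (Q : DyadicCube d) : MeasurableSet Q.toSet :=
  Q.toSet_eq_pi ▸ MeasurableSet.univ_pi fun _ => measurableSet_Ico

lemma isBounded_toSet (Q : DyadicCube d) : Bornology.IsBounded Q.toSet :=
  Q.toSet_eq_pi ▸ Bornology.IsBounded.pi fun _ => isBounded_Ico _ _

lemma measure_toSet_lt_top (μ : Measure (Fin d → ℝ)) [IsLocallyFiniteMeasure μ]
    (Q : DyadicCube d) : μ Q.toSet < ⊤ :=
  Q.isBounded_toSet.measure_lt_top

lemma integrableOn_toSet {μ : Measure (Fin d → ℝ)} {f : (Fin d → ℝ) → ℝ}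
    (hf : LocallyIntegrable f μ) (Q : DyadicCube d) : IntegrableOn f Q.toSet μ :=
  hf.integrableOn_isCompact Q.isBounded_toSet.isCompact_closure |>.mono_set subset_closure

lemma interior_toSet_nonempty (Q : DyadicCube d) : (interior Q.toSet).Nonempty := by
  have h2 : (0 : ℝ) < 2 ^ Q.n := by positivity
  refine ⟨fun i => (Q.m i + 1 / 2) * 2 ^ Q.n, ?_⟩
  rw [toSet_eq_pi, interior_pi_set finite_univ]
  intro i _
  simp only [interior_Ico, mem_Ioo]
  constructor <;> nlinarith

lemma toSet_subset_closedBall {Q : DyadicCube d} {x : Fin d → ℝ} (hx : x ∈ Q.toSet) :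
    Q.toSet ⊆ closedBall x (2 ^ Q.n) := fun y hy => by
  rw [mem_closedBall, dist_pi_le_iff (by positivity)]
  intro i
  rw [Real.dist_eq, abs_le]
  have := hx i; have := hy i
  constructor <;> nlinarith

/-- Maximality is measured by generation rather than by inclusion of underlying sets, since for
`d = 0` all cubes have the same underlying set. -/
def maximalCubes (T : Set (DyadicCube d)) : Set (DyadicCube d) :=
  {S ∈ T | ∀ S' ∈ T, S.toSet ⊆ S'.toSet → S'.n ≤ S.n}

lemma pairwiseDisjoint_maximalCubes (T : Set (DyadicCube d)) :
    (maximalCubes T).PairwiseDisjoint toSet := by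
  intro S hS S' hS' hne
  refine disjoint_left.2 fun x hx hx' => hne (eq_of_mem_of_mem hx hx' ?_)
  rcases le_total S.n S'.n with h | h
  · exact h.antisymm (hS.2 S' hS'.1 (toSet_subset_of_mem_of_mem hx hx' h))
  · exact (hS'.2 S hS.1 (toSet_subset_of_mem_of_mem hx' hx h)).antisymm h

lemma exists_subset_mem_maximalCubes {T : Set (DyadicCube d)} {n₀ : ℤ}
    (hT : ∀ S ∈ T, S.n ≤ n₀) {Q : DyadicCube d} (hQ : Q ∈ T) :
    ∃ S ∈ maximalCubes T, Q.toSet ⊆ S.toSet := by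
  obtain ⟨x, hx⟩ := Q.toSet_nonempty
  obtain ⟨l, ⟨hQl, hlT⟩, hl⟩ := Int.exists_greatest_of_bdd
    (P := fun k => Q.n ≤ k ∧ cubeOf k x ∈ T) ⟨n₀, fun k hk => hT _ hk.2⟩
    ⟨Q.n, le_rfl, eq_cubeOf_of_mem hx ▸ hQ⟩
  refine ⟨cubeOf l x, ⟨hlT, fun S' hS' hsub => ?_⟩, ?_⟩
  · have hxS' := hsub (mem_cubeOf l x)
    rcases le_total S'.n Q.n with h | h
    · exact h.trans hQl
    · exact hl _ ⟨h, by rwa [← eq_cubeOf_of_mem hxS']⟩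
  · exact eq_cubeOf_of_mem hx ▸ cubeOf_subset_cubeOf x hQl

lemma parent_notMem_of_mem_maximalCubes {T : Set (DyadicCube d)} {S : DyadicCube d}
    (hS : S ∈ maximalCubes T) : S.parent ∉ T := fun h => by
  have : S.n + 1 ≤ S.n := hS.2 _ h S.subset_parent
  omega

lemma eventually_cubeOf_subset_closedBall (x : Fin d → ℝ) {ε : ℝ} (hε : 0 < ε) :
    ∀ᶠ n in atBot, (cubeOf n x).toSet ⊆ closedBall x ε := by
  obtain ⟨k, hk⟩ := exists_pow_lt_of_lt_one hε one_half_lt_one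
  filter_upwards [eventually_le_atBot (-k : ℤ)] with n hn
  refine (toSet_subset_closedBall (mem_cubeOf n x)).trans (closedBall_subset_closedBall ?_)
  calc (2 : ℝ) ^ n ≤ 2 ^ (-k : ℤ) := zpow_le_zpow_right₀ one_le_two hn
    _ ≤ ε := by simpa [zpow_neg] using hk.le

/-- The generation bound `n ≤ 0` keeps the generations of any subfamily bounded above, so that
maximal cubes exist in the covering argument. -/
def vitaliFamily (μ : Measure (Fin d → ℝ)) : VitaliFamily μ where
  setsAt x := toSet '' {Q | x ∈ Q.toSet ∧ Q.n ≤ 0}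
  measurableSet _ := by
    rintro _ ⟨Q, -, rfl⟩
    exact Q.measurableSet_toSet_s11
  nonempty_interior _ := by
    rintro _ ⟨Q, -, rfl⟩
    exact Q.interior_toSet_nonempty
  nontrivial x ε hε := by
    obtain ⟨n, hn0, hn⟩ :=
      ((eventually_le_atBot 0).and (eventually_cubeOf_subset_closedBall x hε)).exists
    exact ⟨_, ⟨cubeOf n x, ⟨mem_cubeOf n x, hn0⟩, rfl⟩, hn⟩
  covering s F hF hFfine := by
    set T := {Q : DyadicCube d | Q.n ≤ 0 ∧ ∃ x ∈ s, Q.toSet ∈ F x}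
    have hcover : ∀ x ∈ s, ∃ Q ∈ T, x ∈ Q.toSet := fun x hx => by
      obtain ⟨_, hFx, -⟩ := hFfine x hx 1 one_pos
      obtain ⟨Q, ⟨hxQ, hQn⟩, rfl⟩ := hF x hx hFx
      exact ⟨Q, ⟨hQn, x, hx, hFx⟩, hxQ⟩
    choose! c hcs hcF using fun Q (hQ : Q ∈ T) => hQ.2
    refine ⟨(fun Q => (c Q, Q.toSet)) '' maximalCubes T, ?_, ?_, ?_, ?_⟩
    · rintro _ ⟨Q, hQ, rfl⟩
      exact hcs Q hQ.1
    · rintro _ ⟨Q, hQ, rfl⟩ _ ⟨Q', hQ', rfl⟩ hne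
      exact pairwiseDisjoint_maximalCubes T hQ hQ' fun h => hne (h ▸ rfl)
    · rintro _ ⟨Q, hQ, rfl⟩
      exact hcF Q hQ.1
    · rw [sdiff_eq_empty.2, measure_empty]
      intro x hx
      obtain ⟨Q, hQ, hxQ⟩ := hcover x hx
      obtain ⟨S, hS, hQS⟩ := exists_subset_mem_maximalCubes (fun S hS => hS.1) hQ
      exact mem_biUnion (mem_image_of_mem _ hS) (hQS hxQ)

lemma tendsto_cubeOf_filterAt (μ : Measure (Fin d → ℝ)) (x : Fin d → ℝ) :
    Tendsto (fun n => (cubeOf n x).toSet) atBot ((vitaliFamily μ).filterAt x) :=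
  (vitaliFamily μ).tendsto_filterAt_iff.2
    ⟨(eventually_le_atBot 0).mono fun n hn => ⟨_, ⟨mem_cubeOf n x, hn⟩, rfl⟩,
      fun _ hε => eventually_cubeOf_subset_closedBall x hε⟩

section

variable {μ : Measure (Fin d → ℝ)} [IsLocallyFiniteMeasure μ] {f : (Fin d → ℝ) → ℝ}

theorem ae_tendsto_average_cubeOf (hf : LocallyIntegrable f μ) :
    ∀ᵐ x ∂μ, Tendsto (fun n => ⨍ y in (cubeOf n x).toSet, ‖f y - f x‖ ∂μ) atBot (𝓝 0) ∧
      ∀ᶠ n in atBot, 0 < μ (cubeOf n x).toSet := by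
  filter_upwards [(vitaliFamily μ).ae_tendsto_average_norm_sub hf,
    (vitaliFamily μ).ae_eventually_measure_pos] with x hlim hpos
  exact ⟨hlim.comp (tendsto_cubeOf_filterAt μ x), (tendsto_cubeOf_filterAt μ x).eventually hpos⟩

lemma ae_abs_sub_le_of_eventually_integral_le (hf : LocallyIntegrable f μ) (a lam : ℝ) :
    ∀ᵐ x ∂μ, (∀ᶠ n in atBot,
      ∫ y in (cubeOf n x).toSet, |f y - a| ∂μ ≤ lam * μ.real (cubeOf n x).toSet) →
      |f x - a| ≤ lam := by
  filter_upwards [ae_tendsto_average_cubeOf hf] with x ⟨hlim, hpos⟩ hle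
  refine ge_of_tendsto (f := fun n => lam + ⨍ y in (cubeOf n x).toSet, ‖f y - f x‖ ∂μ)
    (by simpa using hlim.const_add lam) ?_
  filter_upwards [hpos, hle] with n hn hn'
  have hfin := (measure_toSet_lt_top μ (cubeOf n x)).ne
  have hμ : 0 < μ.real (cubeOf n x).toSet := ENNReal.toReal_pos hn.ne' hfin
  refine (abs_sub_le_setAverage_add (integrableOn_toSet hf _) hn.ne' hfin x a).trans ?_
  gcongr
  rwa [setAverage_eq, smul_eq_mul, inv_mul_le_iff₀ hμ, mul_comm]

end

section

variable {μ : Measure (Fin d → ℝ)} {f : (Fin d → ℝ) → ℝ} {N a : ℝ} {R S : DyadicCube d}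

def badCubes (μ : Measure (Fin d → ℝ)) (f : (Fin d → ℝ) → ℝ) (N a : ℝ) (R : DyadicCube d) :
    Set (DyadicCube d) :=
  {S | S.n ≤ R.n ∧ S.toSet ⊆ R.toSet ∧ 2 * N * μ.real S.toSet < ∫ x in S.toSet, |f x - a| ∂μ}

lemma notMem_badCubes_self (hN : 0 ≤ N) (hR : ∫ x in R.toSet, |f x - a| ∂μ ≤ N * μ.real R.toSet) :
    R ∉ badCubes μ f N a R := fun h => by
  have := h.2.2
  nlinarith [measureReal_nonneg (μ := μ) (s := R.toSet)]

lemma measure_ne_zero_of_mem_badCubes (hS : S ∈ badCubes μ f N a R) :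
    μ S.toSet ≠ 0 := fun h0 => by
  have := hS.2.2
  rw [Measure.restrict_eq_zero.2 h0, integral_zero_measure, measureReal_def, h0] at this
  simp at this

lemma parent_mem_of_mem_badCubes (hS : S ∈ badCubes μ f N a R) (hSR : S ≠ R) :
    S.parent.n ≤ R.n ∧ S.parent.toSet ⊆ R.toSet := by
  obtain ⟨x, hx⟩ := S.toSet_nonempty
  have hlt : S.n < R.n :=
    hS.1.lt_of_ne fun h => hSR (eq_of_mem_of_mem hx (hS.2.1 hx) h)
  exact ⟨hlt, toSet_subset_of_mem_of_mem (S.subset_parent hx) (hS.2.1 hx) hlt⟩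

lemma abs_avg_parent_sub_le [IsLocallyFiniteMeasure μ] (hf : LocallyIntegrable f μ) (hN : 0 ≤ N)
    (hR : ∫ x in R.toSet, |f x - a| ∂μ ≤ N * μ.real R.toSet)
    (hS : S ∈ maximalCubes (badCubes μ f N a R)) :
    |avg μ f S.parent.toSet - a| ≤ 2 * N := by
  have hSR : S ≠ R := fun h => notMem_badCubes_self hN hR (h ▸ hS.1)
  obtain ⟨hn, hsub⟩ := parent_mem_of_mem_badCubes hS.1 hSR
  refine abs_avg_sub_le (integrableOn_toSet hf _) ?_ (measure_toSet_lt_top μ _).ne ?_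
  · exact fun h0 => measure_ne_zero_of_mem_badCubes hS.1 (measure_mono_null S.subset_parent h0)
  · by_contra h
    exact parent_notMem_of_mem_maximalCubes hS ⟨hn, hsub, not_le.1 h⟩

lemma tsum_measure_maximalCubes_badCubes_le [IsLocallyFiniteMeasure μ]
    (hf : LocallyIntegrable f μ) (hN : 0 < N)
    (hR : ∫ x in R.toSet, |f x - a| ∂μ ≤ N * μ.real R.toSet) :
    ∑' S : maximalCubes (badCubes μ f N a R), μ (S : DyadicCube d).toSet ≤ 2⁻¹ * μ R.toSet := by
  have hfa : IntegrableOn (fun x => |f x - a|) R.toSet μ :=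
    (integrableOn_toSet hf R |>.sub (integrableOn_const (measure_toSet_lt_top μ R).ne)).abs
  have key := ofReal_mul_tsum_measure_le_ofReal_setIntegral
    (s := fun S : maximalCubes (badCubes μ f N a R) => (S : DyadicCube d).toSet) hfa
    (fun _ => abs_nonneg _) (measure_toSet_lt_top μ R).ne (fun S => measurableSet_toSet_s11 _)
    (fun S => S.2.1.2.1)
    (fun S S' h => pairwiseDisjoint_maximalCubes _ S.2 S'.2 (Subtype.coe_ne_coe.2 h))
    (by positivity : 0 ≤ 2 * N) (fun S => S.2.1.2.2.le)
  have hRN : ENNReal.ofReal (∫ x in R.toSet, |f x - a| ∂μ) ≤ ENNReal.ofReal N * μ R.toSet := by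
    rw [← ENNReal.ofReal_toReal (measure_toSet_lt_top μ R).ne, ← ENNReal.ofReal_mul hN.le]
    exact ENNReal.ofReal_le_ofReal hR
  rw [ENNReal.ofReal_mul zero_le_two, ENNReal.ofReal_ofNat, mul_comm 2, mul_assoc] at key
  rw [← ENNReal.div_eq_inv_mul, ENNReal.le_div_iff_mul_le (by simp) (by simp), mul_comm]
  exact (ENNReal.mul_le_mul_iff_right (by simpa using hN) ENNReal.ofReal_ne_top).1
    (key.trans hRN)

lemma ae_abs_sub_le_of_forall_notMem_maximalCubes [IsLocallyFiniteMeasure μ]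
    (hf : LocallyIntegrable f μ) :
    ∀ᵐ x ∂μ, x ∈ R.toSet → (∀ S ∈ maximalCubes (badCubes μ f N a R), x ∉ S.toSet) →
      |f x - a| ≤ 2 * N := by
  filter_upwards [ae_abs_sub_le_of_eventually_integral_le hf a (2 * N)] with x hx hxR hxS
  refine hx ((eventually_le_atBot R.n).mono fun n hn => not_lt.1 fun hbad => ?_)
  have hP : cubeOf n x ∈ badCubes μ f N a R :=
    ⟨hn, toSet_subset_of_mem_of_mem (mem_cubeOf n x) hxR hn, hbad⟩
  obtain ⟨S, hS, hPS⟩ := exists_subset_mem_maximalCubes (fun S hS => hS.1) hP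
  exact hxS S hS (hPS (mem_cubeOf n x))

lemma setOf_lt_abs_sub_subset {b : ℝ} (hb : |b - a| ≤ 2 * N) (k : ℕ) :
    {x | 3 * N * ↑(k + 1) < |f x - a|} ⊆ {x | 3 * N * k < |f x - b|} := fun x hx => by
  have : 3 * N * (k + 1) < |f x - a| := by exact_mod_cast hx
  have := abs_sub_le (f x) b a
  have := (abs_nonneg _).trans hb
  show 3 * N * k < |f x - b|
  linarith

theorem measure_inter_lt_abs_sub_le [IsLocallyFiniteMeasure μ] (hf : LocallyIntegrable f μ)
    (hN : 0 < N)
    (hBMO : ∀ S : DyadicCube d,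
      ∫ x in S.toSet, |f x - avg μ f S.parent.toSet| ∂μ ≤ N * μ.real S.toSet)
    (k : ℕ) (R : DyadicCube d) (a : ℝ)
    (hR : ∫ x in R.toSet, |f x - a| ∂μ ≤ N * μ.real R.toSet) :
    μ (R.toSet ∩ {x | 3 * N * k < |f x - a|}) ≤ 2⁻¹ ^ k * μ R.toSet := by
  induction k generalizing R a with
  | zero => simpa using measure_mono inter_subset_left
  | succ k ih =>
    set M := maximalCubes (badCubes μ f N a R)
    set E := {x | 3 * N * ↑(k + 1) < |f x - a|}
    have hM : ∀ S : M, μ ((S : DyadicCube d).toSet ∩ E) ≤ 2⁻¹ ^ k * μ (S : DyadicCube d).toSet :=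
      fun ⟨S, hS⟩ => (measure_mono (inter_subset_inter_right _
        (setOf_lt_abs_sub_subset (abs_avg_parent_sub_le hf hN.le hR hS) k))).trans
        (ih S _ (hBMO S))
    have hcover : (R.toSet ∩ E : Set (Fin d → ℝ)) ≤ᵐ[μ] ⋃ S : M, (S : DyadicCube d).toSet ∩ E := by
      filter_upwards [ae_abs_sub_le_of_forall_notMem_maximalCubes hf] with x hx ⟨hxR, hxE⟩
      by_contra hxU
      have hle := hx hxR fun S hS hxS => hxU (mem_iUnion.2 ⟨⟨S, hS⟩, hxS, hxE⟩)
      have : 3 * N * (k + 1) < |f x - a| := by exact_mod_cast hxE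
      nlinarith [(k.cast_nonneg : (0 : ℝ) ≤ k)]
    calc μ (R.toSet ∩ E)
        ≤ ∑' S : M, 2⁻¹ ^ k * μ (S : DyadicCube d).toSet :=
          (measure_mono_ae hcover).trans ((measure_iUnion_le _).trans (ENNReal.tsum_le_tsum hM))
      _ ≤ 2⁻¹ ^ k * (2⁻¹ * μ R.toSet) := by
          rw [ENNReal.tsum_mul_left]
          gcongr
          exact tsum_measure_maximalCubes_badCubes_le hf hN hR
      _ = 2⁻¹ ^ (k + 1) * μ R.toSet := by ring

theorem setIntegral_exp_abs_sub_avg_parent_le [IsLocallyFiniteMeasure μ]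
    (hf : LocallyIntegrable f μ) (hN : 0 < N)
    (hBMO : ∀ S : DyadicCube d,
      ∫ x in S.toSet, |f x - avg μ f S.parent.toSet| ∂μ ≤ N * μ.real S.toSet)
    (Q : DyadicCube d) :
    ∫ x in Q.toSet, Real.exp (Real.log 2 / 6 * |f x - avg μ f Q.parent.toSet| / N) ∂μ ≤
      12 * μ.real Q.toSet := by
  set a := avg μ f Q.parent.toSet
  have hu : AEMeasurable (fun x => |f x - a| / (3 * N)) (μ.restrict Q.toSet) :=
    (hf.aestronglyMeasurable.aemeasurable.sub_const a).abs.div_const _ |>.restrict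
  have hdist : ∀ k : ℕ, μ.restrict Q.toSet {x | k < |f x - a| / (3 * N)} ≤
      2⁻¹ ^ k * μ.restrict Q.toSet univ := fun k => by
    have hset : {x | (k : ℝ) < |f x - a| / (3 * N)} = {x | 3 * N * k < |f x - a|} := by
      ext x
      simp only [mem_ofPred_eq, lt_div_iff₀ (by positivity : (0 : ℝ) < 3 * N)]
      rw [mul_comm]
    rw [Measure.restrict_apply' Q.measurableSet_toSet_s11, Measure.restrict_apply_univ, hset,
      inter_comm]
    exact measure_inter_lt_abs_sub_le hf hN hBMO k Q a (hBMO Q)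
  have hexp : ∀ x, Real.log 2 / 6 * |f x - a| / N = Real.log 2 / 2 * (|f x - a| / (3 * N)) :=
    fun x => by field_simp; ring
  have hle := lintegral_exp_le_of_measure_lt_le hu hdist
  rw [Measure.restrict_apply_univ] at hle
  simp_rw [hexp]
  rw [integral_eq_lintegral_of_nonneg_ae (ae_of_all _ fun _ => (Real.exp_pos _).le)
    (Real.measurable_exp.comp_aemeasurable (hu.const_mul _)).aestronglyMeasurable]
  refine (ENNReal.toReal_mono ?_ hle).trans_eq ?_
  · exact ENNReal.mul_ne_top ENNReal.ofNat_ne_top (measure_toSet_lt_top μ Q).ne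
  · rw [ENNReal.toReal_mul, ENNReal.toReal_ofNat, measureReal_def]

end

end DyadicCube

lemma bmoNorm_nonneg {d : ℕ} (μ : Measure (Fin d → ℝ)) (f : (Fin d → ℝ) → ℝ) : 0 ≤ bmoNorm μ f :=
  Real.sSup_nonneg fun _ ⟨_, _, ht⟩ =>
    ht ▸ div_nonneg (integral_nonneg fun _ => abs_nonneg _) ENNReal.toReal_nonneg

lemma integral_abs_sub_avg_parent_le_bmoNorm {d : ℕ} {μ : Measure (Fin d → ℝ)}
    [IsLocallyFiniteMeasure μ] {f : (Fin d → ℝ) → ℝ}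
    (hB : BddAbove {t : ℝ | ∃ Q : DyadicCube d, 0 < μ Q.toSet ∧
      t = (∫ x in Q.toSet, |f x - avg μ f Q.parent.toSet| ∂μ) / (μ Q.toSet).toReal})
    (Q : DyadicCube d) :
    ∫ x in Q.toSet, |f x - avg μ f Q.parent.toSet| ∂μ ≤ bmoNorm μ f * μ.real Q.toSet := by
  rcases eq_zero_or_pos (μ Q.toSet) with h0 | hpos
  · simp [Measure.restrict_eq_zero.2 h0, measureReal_def, h0]
  · have hμ : 0 < μ.real Q.toSet := ENNReal.toReal_pos hpos.ne' (Q.measure_toSet_lt_top μ).ne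
    rw [← div_le_iff₀ hμ]
    exact le_csSup hB ⟨Q, hpos, rfl⟩

/-- dyadic martingale John–Nirenberg inequality. -/
theorem dyadic_martingale_john_nirenberg :
    ∃ c C : ℝ, 0 < c ∧ 0 < C ∧
      ∀ (d : ℕ) (μ : Measure (Fin d → ℝ)), IsLocallyFiniteMeasure μ →
      ∀ (f : (Fin d → ℝ) → ℝ), MeasureTheory.LocallyIntegrable f μ →
        BddAbove {t : ℝ | ∃ Q : DyadicCube d, 0 < μ Q.toSet ∧
          t = (∫ x in Q.toSet, |f x - avg μ f Q.parent.toSet| ∂μ) / (μ Q.toSet).toReal} →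
      ∀ (Q : DyadicCube d), 0 < μ Q.toSet → μ Q.toSet < ⊤ →
        ∫ x in Q.toSet,
            Real.exp (c * |f x - avg μ f Q.parent.toSet| / bmoNorm μ f) ∂μ ≤
          C * (μ Q.toSet).toReal := by
  refine ⟨Real.log 2 / 6, 12, by positivity, by norm_num, ?_⟩
  intro d μ _ f hf hB Q _ _
  rcases (bmoNorm_nonneg μ f).eq_or_lt with hN | hN
  · -- for a vanishing norm the integrand is `exp (x / 0) = 1`
    simp only [← hN, _root_.div_zero, Real.exp_zero, setIntegral_const, smul_eq_mul, mul_one]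
    exact le_mul_of_one_le_left measureReal_nonneg (by norm_num)
  · exact DyadicCube.setIntegral_exp_abs_sub_avg_parent_le hf hN
      (integral_abs_sub_avg_parent_le_bmoNorm hB) Q
end
end
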